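/- Let n ≥ 1, λ_1,…,λ_n pairwise distinct reals, I an open interval with 0 ∉ I, and let ψ_j, φ_j : ℝ × I → ℝ (j = 1,…,n) be smooth functions satisfying the Garnier-type system (G): ∂_x² ψ_j = (u − λ_j) ψ_j, ∂_x² φ_j = (u − λ_j) φ_j, ∂_t ψ_j = (∂_x u) ψ_j − 2(u + 2λ_j) ∂_x ψ_j, ∂_t φ_j = (∂_x u) φ_j − 2(u + 2λ_j) ∂_x φ_j, with u = x/(6t) + (ψ_1φ_1 + ⋯ + ψ_nφ_n)/(3t). Assume the products y_j := ψ_j φ_j are nowhere vanishing. Then the Wronskians α_j := (∂_x ψ_j) φ_j − ψ_j (∂_x φ_j) are constant on ℝ × I, and the y_j satisfy ∂_x² y_j = ((∂_x y_j)² − α_j²)/(2 y_j) + 2(u − λ_j) y_j and ∂_t y_j = 2(∂_x u) y_j − 2(u + 2λ_j) ∂_x y_j, together with u = x/(6t) + (y_1 + ⋯ + y_n)/(3t). -/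

import Mathlib

/-!
Since `ψⱼ` and `φⱼ` solve the same equation `ψₓₓ = (u - λⱼ) ψ`, their Wronskian
`W = ψₓ φ - ψ φₓ` has `Wₓ = 0`. Since they also follow the same flow
`ψₜ = uₓ ψ - 2 (u + 2λⱼ) ψₓ`, symmetry of mixed partials gives
`Wₜ = ∂ₓ(ψₜ φ - ψ φₜ) + 2 (ψₓ φₜ - ψₜ φₓ) = ∂ₓ(-2 (u + 2λⱼ) W) + 2 uₓ W = 0`,
so `W = αⱼ` is constant on the strip `ℝ × I`. The equations for `y = ψ φ` then follow from the
product rule and `2 ψₓ φₓ = (yₓ² - αⱼ²) / (2 y)`.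
-/

open Set Function

noncomputable section

/-- Partial derivative in the first (space) variable. -/
def pdx (u : ℝ → ℝ → ℝ) : ℝ → ℝ → ℝ := fun x t => deriv (fun x' => u x' t) x

/-- Partial derivative in the second (time) variable. -/
def pdt (u : ℝ → ℝ → ℝ) : ℝ → ℝ → ℝ := fun x t => deriv (fun t' => u x t') t

/-- The constraint (uy): `u = x/(6t) + (y₁ + ⋯ + yₙ)/(3t)`. -/
def ucon (n : ℕ) (y : Fin n → ℝ → ℝ → ℝ) : ℝ → ℝ → ℝ :=
  fun x t => x / (6*t) + (∑ j, y j x t) / (3*t)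

open Topology
open scoped ContDiff

section PartialDerivatives

variable {U : Set (ℝ × ℝ)} {f g : ℝ → ℝ → ℝ} {x t : ℝ}

theorem DifferentiableAt.hasDerivAt_fderiv_apply_fst
    (hf : DifferentiableAt ℝ (uncurry f) (x, t)) :
    HasDerivAt (fun x' => f x' t) (fderiv ℝ (uncurry f) (x, t) (1, 0)) x :=
  hf.hasFDerivAt.comp_hasDerivAt (f := fun x' => (x', t)) x
    ((hasDerivAt_id x).prodMk (hasDerivAt_const x t))

theorem DifferentiableAt.hasDerivAt_fderiv_apply_snd
    (hf : DifferentiableAt ℝ (uncurry f) (x, t)) :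
    HasDerivAt (fun t' => f x t') (fderiv ℝ (uncurry f) (x, t) (0, 1)) t :=
  hf.hasFDerivAt.comp_hasDerivAt (f := fun t' => (x, t')) t
    ((hasDerivAt_const t x).prodMk (hasDerivAt_id t))

theorem pdx_eq_fderiv_apply (hf : DifferentiableAt ℝ (uncurry f) (x, t)) :
    pdx f x t = fderiv ℝ (uncurry f) (x, t) (1, 0) :=
  hf.hasDerivAt_fderiv_apply_fst.deriv

theorem pdt_eq_fderiv_apply (hf : DifferentiableAt ℝ (uncurry f) (x, t)) :
    pdt f x t = fderiv ℝ (uncurry f) (x, t) (0, 1) :=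
  hf.hasDerivAt_fderiv_apply_snd.deriv

theorem DifferentiableAt.hasDerivAt_pdx (hf : DifferentiableAt ℝ (uncurry f) (x, t)) :
    HasDerivAt (fun x' => f x' t) (pdx f x t) x :=
  pdx_eq_fderiv_apply hf ▸ hf.hasDerivAt_fderiv_apply_fst

theorem DifferentiableAt.hasDerivAt_pdt (hf : DifferentiableAt ℝ (uncurry f) (x, t)) :
    HasDerivAt (fun t' => f x t') (pdt f x t) t :=
  pdt_eq_fderiv_apply hf ▸ hf.hasDerivAt_fderiv_apply_snd

theorem pdx_mul (hf : DifferentiableAt ℝ (uncurry f) (x, t))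
    (hg : DifferentiableAt ℝ (uncurry g) (x, t)) :
    pdx (fun x t => f x t * g x t) x t = pdx f x t * g x t + f x t * pdx g x t :=
  (hf.hasDerivAt_pdx.mul hg.hasDerivAt_pdx).deriv

theorem pdt_mul (hf : DifferentiableAt ℝ (uncurry f) (x, t))
    (hg : DifferentiableAt ℝ (uncurry g) (x, t)) :
    pdt (fun x t => f x t * g x t) x t = pdt f x t * g x t + f x t * pdt g x t :=
  (hf.hasDerivAt_pdt.mul hg.hasDerivAt_pdt).deriv

theorem ContDiffOn.differentiableAt_of_isOpen {n : WithTop ℕ∞}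
    (hf : ContDiffOn ℝ n (uncurry f) U) (hU : IsOpen U) (hn : n ≠ 0) (hp : (x, t) ∈ U) :
    DifferentiableAt ℝ (uncurry f) (x, t) :=
  (hf.differentiableOn hn).differentiableAt (hU.mem_nhds hp)

theorem ContDiffOn.pdx_of_isOpen {m n : WithTop ℕ∞} (hf : ContDiffOn ℝ n (uncurry f) U)
    (hU : IsOpen U) (hmn : m + 1 ≤ n) : ContDiffOn ℝ m (uncurry (pdx f)) U := by
  refine ((hf.fderiv_of_isOpen hU hmn).clm_apply
    (contDiffOn_const (c := ((1 : ℝ), (0 : ℝ))))).congr fun ⟨x, t⟩ hp => ?_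
  exact pdx_eq_fderiv_apply (hf.differentiableAt_of_isOpen hU
    (ne_bot_of_le_ne_bot one_ne_zero (le_add_self.trans hmn)) hp)

theorem ContDiffOn.differentiableAt_pdx_of_isOpen (hf : ContDiffOn ℝ 2 (uncurry f) U)
    (hU : IsOpen U) (hp : (x, t) ∈ U) : DifferentiableAt ℝ (uncurry (pdx f)) (x, t) :=
  (hf.pdx_of_isOpen hU (m := 1) (by norm_num)).differentiableAt_of_isOpen hU one_ne_zero hp

theorem ContDiffOn.pdt_of_isOpen {m n : WithTop ℕ∞} (hf : ContDiffOn ℝ n (uncurry f) U)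
    (hU : IsOpen U) (hmn : m + 1 ≤ n) : ContDiffOn ℝ m (uncurry (pdt f)) U := by
  refine ((hf.fderiv_of_isOpen hU hmn).clm_apply
    (contDiffOn_const (c := ((0 : ℝ), (1 : ℝ))))).congr fun ⟨x, t⟩ hp => ?_
  exact pdt_eq_fderiv_apply (hf.differentiableAt_of_isOpen hU
    (ne_bot_of_le_ne_bot one_ne_zero (le_add_self.trans hmn)) hp)

theorem ContDiffOn.differentiableAt_pdt_of_isOpen (hf : ContDiffOn ℝ 2 (uncurry f) U)
    (hU : IsOpen U) (hp : (x, t) ∈ U) : DifferentiableAt ℝ (uncurry (pdt f)) (x, t) :=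
  (hf.pdt_of_isOpen hU (m := 1) (by norm_num)).differentiableAt_of_isOpen hU one_ne_zero hp

theorem pdt_pdx_eq_pdx_pdt (hf : ContDiffOn ℝ 2 (uncurry f) U) (hU : IsOpen U)
    (hp : (x, t) ∈ U) : pdt (pdx f) x t = pdx (pdt f) x t := by
  have hD : DifferentiableAt ℝ (fderiv ℝ (uncurry f)) (x, t) :=
    ((hf.fderiv_of_isOpen hU (m := 1) (by norm_num)).differentiableOn
      one_ne_zero).differentiableAt (hU.mem_nhds hp)
  have hx : uncurry (pdx f) =ᶠ[𝓝 (x, t)] fun p => fderiv ℝ (uncurry f) p (1, 0) := by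
    filter_upwards [hU.mem_nhds hp] with ⟨x', t'⟩ hp'
    exact pdx_eq_fderiv_apply (hf.differentiableAt_of_isOpen hU two_ne_zero hp')
  have ht : uncurry (pdt f) =ᶠ[𝓝 (x, t)] fun p => fderiv ℝ (uncurry f) p (0, 1) := by
    filter_upwards [hU.mem_nhds hp] with ⟨x', t'⟩ hp'
    exact pdt_eq_fderiv_apply (hf.differentiableAt_of_isOpen hU two_ne_zero hp')
  rw [pdt_eq_fderiv_apply (hf.differentiableAt_pdx_of_isOpen hU hp),
    pdx_eq_fderiv_apply (hf.differentiableAt_pdt_of_isOpen hU hp), hx.fderiv_eq, ht.fderiv_eq,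
    fderiv_clm_apply hD (differentiableAt_const _), fderiv_clm_apply hD (differentiableAt_const _)]
  simpa using ((hf.contDiffAt (hU.mem_nhds hp)).isSymmSndFDerivAt (by simp)).eq (0, 1) (1, 0)

theorem pdx_pdx_mul (hf : ContDiffOn ℝ 2 (uncurry f) U) (hg : ContDiffOn ℝ 2 (uncurry g) U)
    (hU : IsOpen U) (hp : (x, t) ∈ U) :
    pdx (pdx (fun x t => f x t * g x t)) x t
      = pdx (pdx f) x t * g x t + 2 * (pdx f x t * pdx g x t) + f x t * pdx (pdx g) x t := by
  have hnear : ∀ᶠ x' in 𝓝 x, (x', t) ∈ U :=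
    (continuous_id.prodMk continuous_const).continuousAt.preimage_mem_nhds (hU.mem_nhds hp)
  have heq : (fun x' => pdx (fun x t => f x t * g x t) x' t)
      =ᶠ[𝓝 x] fun x' => pdx f x' t * g x' t + f x' t * pdx g x' t :=
    hnear.mono fun x' hp' => pdx_mul (hf.differentiableAt_of_isOpen hU two_ne_zero hp')
      (hg.differentiableAt_of_isOpen hU two_ne_zero hp')
  show deriv (fun x' => pdx (fun x t => f x t * g x t) x' t) x = _
  rw [heq.deriv_eq]
  exact ((((hf.differentiableAt_pdx_of_isOpen hU hp).hasDerivAt_pdx.mul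
    (hg.differentiableAt_of_isOpen hU two_ne_zero hp).hasDerivAt_pdx).add
    ((hf.differentiableAt_of_isOpen hU two_ne_zero hp).hasDerivAt_pdx.mul
    (hg.differentiableAt_pdx_of_isOpen hU hp).hasDerivAt_pdx)).deriv).trans (by ring)

theorem exists_eq_const_of_hasDerivAt_zero {I : Set ℝ} (hI : IsOpen I) (hI' : IsPreconnected I)
    (hx : ∀ x t, t ∈ I → HasDerivAt (fun x' => f x' t) 0 x)
    (ht : ∀ x t, t ∈ I → HasDerivAt (fun t' => f x t') 0 t) :
    ∃ c, ∀ x t, t ∈ I → f x t = c := by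
  obtain ⟨c, hc⟩ := hI.exists_is_const_of_deriv_eq_zero hI' (f := fun t => f 0 t)
    (fun t h => (ht 0 t h).differentiableAt.differentiableWithinAt) (fun t h => (ht 0 t h).deriv)
  refine ⟨c, fun x t h => ?_⟩
  rw [← hc t h]
  exact is_const_of_deriv_eq_zero (f := fun x' => f x' t)
    (fun x' => (hx x' t h).differentiableAt) (fun x' => (hx x' t h).deriv) x 0

end PartialDerivatives

def wronskian (ψ φ : ℝ → ℝ → ℝ) : ℝ → ℝ → ℝ :=
  fun x t => pdx ψ x t * φ x t - ψ x t * pdx φ x t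

section Wronskian

variable {U : Set (ℝ × ℝ)} {ψ φ : ℝ → ℝ → ℝ} {x t : ℝ}

theorem hasDerivAt_wronskian_fst (hψ : ContDiffOn ℝ 2 (uncurry ψ) U)
    (hφ : ContDiffOn ℝ 2 (uncurry φ) U) (hU : IsOpen U) (hp : (x, t) ∈ U) :
    HasDerivAt (fun x' => wronskian ψ φ x' t)
      (pdx (pdx ψ) x t * φ x t - ψ x t * pdx (pdx φ) x t) x := by
  have hψx := hψ.differentiableAt_pdx_of_isOpen hU hp
  have hφx := hφ.differentiableAt_pdx_of_isOpen hU hp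
  have hψ' := hψ.differentiableAt_of_isOpen hU two_ne_zero hp
  have hφ' := hφ.differentiableAt_of_isOpen hU two_ne_zero hp
  exact ((hψx.hasDerivAt_pdx.mul hφ'.hasDerivAt_pdx).sub
    (hψ'.hasDerivAt_pdx.mul hφx.hasDerivAt_pdx)).congr_deriv (by ring)

theorem hasDerivAt_wronskian_snd (hψ : ContDiffOn ℝ 2 (uncurry ψ) U)
    (hφ : ContDiffOn ℝ 2 (uncurry φ) U) (hU : IsOpen U) (hp : (x, t) ∈ U) :
    HasDerivAt (fun t' => wronskian ψ φ x t')
      (pdx (fun x t => pdt ψ x t * φ x t - ψ x t * pdt φ x t) x t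
        + 2 * (pdx ψ x t * pdt φ x t - pdt ψ x t * pdx φ x t)) t := by
  have hψx := hψ.differentiableAt_pdx_of_isOpen hU hp
  have hφx := hφ.differentiableAt_pdx_of_isOpen hU hp
  have hψt := hψ.differentiableAt_pdt_of_isOpen hU hp
  have hφt := hφ.differentiableAt_pdt_of_isOpen hU hp
  have hψ' := hψ.differentiableAt_of_isOpen hU two_ne_zero hp
  have hφ' := hφ.differentiableAt_of_isOpen hU two_ne_zero hp
  have hmixed : pdx (fun x t => pdt ψ x t * φ x t - ψ x t * pdt φ x t) x t
      = pdx (pdt ψ) x t * φ x t + pdt ψ x t * pdx φ x t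
        - (pdx ψ x t * pdt φ x t + ψ x t * pdx (pdt φ) x t) :=
    ((hψt.hasDerivAt_pdx.mul hφ'.hasDerivAt_pdx).sub
      (hψ'.hasDerivAt_pdx.mul hφt.hasDerivAt_pdx)).deriv
  refine ((hψx.hasDerivAt_pdt.mul hφ'.hasDerivAt_pdt).sub
    (hψ'.hasDerivAt_pdt.mul hφx.hasDerivAt_pdt)).congr_deriv ?_
  rw [hmixed, pdt_pdx_eq_pdx_pdt hψ hU hp, pdt_pdx_eq_pdx_pdt hφ hU hp]
  ring

end Wronskian

/-- `ψ` solves both equations of (G) for the spectral parameter `lam`, with `u` left arbitrary. -/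
structure IsLaxPairSolution (I : Set ℝ) (u : ℝ → ℝ → ℝ) (lam : ℝ) (ψ : ℝ → ℝ → ℝ) : Prop where
  pdx_pdx_eq : ∀ x t, t ∈ I → pdx (pdx ψ) x t = (u x t - lam) * ψ x t
  pdt_eq : ∀ x t, t ∈ I →
    pdt ψ x t = pdx u x t * ψ x t - 2 * (u x t + 2 * lam) * pdx ψ x t

namespace IsLaxPairSolution

variable {I : Set ℝ} {u ψ φ : ℝ → ℝ → ℝ} {lam x t : ℝ}

theorem hasDerivAt_wronskian_fst (hψ : IsLaxPairSolution I u lam ψ)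
    (hφ : IsLaxPairSolution I u lam φ) (hψs : ContDiffOn ℝ 2 (uncurry ψ) (univ ×ˢ I))
    (hφs : ContDiffOn ℝ 2 (uncurry φ) (univ ×ˢ I)) (hI : IsOpen I) (ht : t ∈ I) :
    HasDerivAt (fun x' => wronskian ψ φ x' t) 0 x := by
  refine (_root_.hasDerivAt_wronskian_fst hψs hφs (isOpen_univ.prod hI)
    ⟨mem_univ x, ht⟩).congr_deriv ?_
  rw [hψ.pdx_pdx_eq x t ht, hφ.pdx_pdx_eq x t ht]
  ring

theorem hasDerivAt_wronskian_snd (hψ : IsLaxPairSolution I u lam ψ)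
    (hφ : IsLaxPairSolution I u lam φ) (hψs : ContDiffOn ℝ 2 (uncurry ψ) (univ ×ˢ I))
    (hφs : ContDiffOn ℝ 2 (uncurry φ) (univ ×ˢ I)) (hI : IsOpen I)
    (hu : HasDerivAt (fun x' => u x' t) (pdx u x t) x) (ht : t ∈ I) :
    HasDerivAt (fun t' => wronskian ψ φ x t') 0 t := by
  have hflux : (fun x' => pdt ψ x' t * φ x' t - ψ x' t * pdt φ x' t)
      = fun x' => -2 * (u x' t + 2 * lam) * wronskian ψ φ x' t := by
    funext x'
    rw [hψ.pdt_eq x' t ht, hφ.pdt_eq x' t ht, wronskian]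
    ring
  have hfluxx : pdx (fun x t => pdt ψ x t * φ x t - ψ x t * pdt φ x t) x t
      = -2 * pdx u x t * wronskian ψ φ x t := by
    show deriv (fun x' => pdt ψ x' t * φ x' t - ψ x' t * pdt φ x' t) x = _
    rw [hflux]
    exact (((hu.add_const (2 * lam)).const_mul (-2)).fun_mul
      (hψ.hasDerivAt_wronskian_fst hφ hψs hφs hI ht)).deriv.trans (by ring)
  refine (_root_.hasDerivAt_wronskian_snd hψs hφs (isOpen_univ.prod hI)
    ⟨mem_univ x, ht⟩).congr_deriv ?_
  rw [hfluxx, hψ.pdt_eq x t ht, hφ.pdt_eq x t ht, wronskian]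
  ring

theorem exists_wronskian_eq_const (hψ : IsLaxPairSolution I u lam ψ)
    (hφ : IsLaxPairSolution I u lam φ) (hψs : ContDiffOn ℝ 2 (uncurry ψ) (univ ×ˢ I))
    (hφs : ContDiffOn ℝ 2 (uncurry φ) (univ ×ˢ I)) (hI : IsOpen I) (hI' : IsPreconnected I)
    (hu : ∀ x t, t ∈ I → HasDerivAt (fun x' => u x' t) (pdx u x t) x) :
    ∃ α, ∀ x t, t ∈ I → wronskian ψ φ x t = α :=
  exists_eq_const_of_hasDerivAt_zero hI hI'
    (fun _ _ ht => hψ.hasDerivAt_wronskian_fst hφ hψs hφs hI ht)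
    (fun x t ht => hψ.hasDerivAt_wronskian_snd hφ hψs hφs hI (hu x t ht) ht)

variable {y : ℝ → ℝ → ℝ} {α : ℝ}

theorem pdx_pdx_mul_eq (hψ : IsLaxPairSolution I u lam ψ) (hφ : IsLaxPairSolution I u lam φ)
    (hψs : ContDiffOn ℝ 2 (uncurry ψ) (univ ×ˢ I)) (hφs : ContDiffOn ℝ 2 (uncurry φ) (univ ×ˢ I))
    (hI : IsOpen I) (hy : ∀ x t, y x t = ψ x t * φ x t) (hy0 : y x t ≠ 0)
    (hα : wronskian ψ φ x t = α) (ht : t ∈ I) :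
    pdx (pdx y) x t = ((pdx y x t) ^ 2 - α ^ 2) / (2 * y x t) + 2 * (u x t - lam) * y x t := by
  obtain rfl : y = fun x t => ψ x t * φ x t := funext₂ hy
  obtain ⟨hψ0, hφ0⟩ : ψ x t ≠ 0 ∧ φ x t ≠ 0 := mul_ne_zero_iff.1 hy0
  have hp : (x, t) ∈ univ ×ˢ I := ⟨mem_univ x, ht⟩
  rw [pdx_pdx_mul hψs hφs (isOpen_univ.prod hI) hp,
    pdx_mul (hψs.differentiableAt_of_isOpen (isOpen_univ.prod hI) two_ne_zero hp)
      (hφs.differentiableAt_of_isOpen (isOpen_univ.prod hI) two_ne_zero hp),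
    ← hα, wronskian, hψ.pdx_pdx_eq x t ht, hφ.pdx_pdx_eq x t ht]
  field_simp
  ring

theorem pdt_mul_eq (hψ : IsLaxPairSolution I u lam ψ) (hφ : IsLaxPairSolution I u lam φ)
    (hψs : ContDiffOn ℝ 2 (uncurry ψ) (univ ×ˢ I)) (hφs : ContDiffOn ℝ 2 (uncurry φ) (univ ×ˢ I))
    (hI : IsOpen I) (hy : ∀ x t, y x t = ψ x t * φ x t) (ht : t ∈ I) :
    pdt y x t = 2 * pdx u x t * y x t - 2 * (u x t + 2 * lam) * pdx y x t := by
  obtain rfl : y = fun x t => ψ x t * φ x t := funext₂ hy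
  have hp : (x, t) ∈ univ ×ˢ I := ⟨mem_univ x, ht⟩
  have hψd := hψs.differentiableAt_of_isOpen (isOpen_univ.prod hI) two_ne_zero hp
  have hφd := hφs.differentiableAt_of_isOpen (isOpen_univ.prod hI) two_ne_zero hp
  rw [pdt_mul hψd hφd, pdx_mul hψd hφd, hψ.pdt_eq x t ht, hφ.pdt_eq x t ht]
  ring

end IsLaxPairSolution

theorem statement7_general
    (n : ℕ)
    (lam : Fin n → ℝ)
    (a b : ℝ) (I : Set ℝ) (hI : I = Set.Ioo a b)
    (psi phi : Fin n → ℝ → ℝ → ℝ)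
    (hpsismooth : ∀ j, ContDiffOn ℝ (⊤ : ℕ∞) (uncurry (psi j)) (univ ×ˢ I))
    (hphismooth : ∀ j, ContDiffOn ℝ (⊤ : ℕ∞) (uncurry (phi j)) (univ ×ˢ I))
    -- the products yⱼ = ψⱼφⱼ
    (y : Fin n → ℝ → ℝ → ℝ)
    (hy : ∀ j x t, y j x t = psi j x t * phi j x t)
    (hyne : ∀ j x t, t ∈ I → y j x t ≠ 0)
    -- the Garnier-type system (G), with u given by the constraint
    (hpsixx : ∀ j x t, t ∈ I →
      pdx (pdx (psi j)) x t = (ucon n y x t - lam j) * psi j x t)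
    (hphixx : ∀ j x t, t ∈ I →
      pdx (pdx (phi j)) x t = (ucon n y x t - lam j) * phi j x t)
    (hpsit : ∀ j x t, t ∈ I →
      pdt (psi j) x t
        = pdx (ucon n y) x t * psi j x t - 2*(ucon n y x t + 2*lam j) * pdx (psi j) x t)
    (hphit : ∀ j x t, t ∈ I →
      pdt (phi j) x t
        = pdx (ucon n y) x t * phi j x t - 2*(ucon n y x t + 2*lam j) * pdx (phi j) x t) :
    -- the Wronskians are constant, and the yⱼ solve (yxx) and (yt) with those constants
    ∃ alp : Fin n → ℝ,
      (∀ j x t, t ∈ I →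
        pdx (psi j) x t * phi j x t - psi j x t * pdx (phi j) x t = alp j)
      ∧ (∀ j x t, t ∈ I →
        pdx (pdx (y j)) x t
          = ((pdx (y j) x t)^2 - (alp j)^2) / (2 * y j x t)
            + 2 * (ucon n y x t - lam j) * y j x t)
      ∧ (∀ j x t, t ∈ I →
        pdt (y j) x t
          = 2 * pdx (ucon n y) x t * y j x t
            - 2 * (ucon n y x t + 2*lam j) * pdx (y j) x t) := by
  have hIo : IsOpen I := hI ▸ isOpen_Ioo
  have hψ j : ContDiffOn ℝ 2 (uncurry (psi j)) (univ ×ˢ I) :=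
    (hpsismooth j).of_le (WithTop.coe_le_coe.2 le_top)
  have hφ j : ContDiffOn ℝ 2 (uncurry (phi j)) (univ ×ˢ I) :=
    (hphismooth j).of_le (WithTop.coe_le_coe.2 le_top)
  have hsolψ j : IsLaxPairSolution I (ucon n y) (lam j) (psi j) := ⟨hpsixx j, hpsit j⟩
  have hsolφ j : IsLaxPairSolution I (ucon n y) (lam j) (phi j) := ⟨hphixx j, hphit j⟩
  have hux x t (ht : t ∈ I) : HasDerivAt (fun x' => ucon n y x' t) (pdx (ucon n y) x t) x := by
    have hyx j : DifferentiableAt ℝ (fun x' => y j x' t) x := by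
      have hp : (x, t) ∈ univ ×ˢ I := ⟨mem_univ x, ht⟩
      simp only [hy]
      exact (((hψ j).differentiableAt_of_isOpen (isOpen_univ.prod hIo) two_ne_zero
        hp).hasDerivAt_pdx.mul ((hφ j).differentiableAt_of_isOpen (isOpen_univ.prod hIo)
        two_ne_zero hp).hasDerivAt_pdx).differentiableAt
    exact ((differentiableAt_id.div_const (6 * t)).add
      ((DifferentiableAt.fun_sum fun j _ => hyx j).div_const (3 * t))).hasDerivAt
  choose alp halp using fun j => (hsolψ j).exists_wronskian_eq_const (hsolφ j) (hψ j) (hφ j)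
    hIo (hI ▸ isPreconnected_Ioo) hux
  exact ⟨alp, halp, fun j x t ht => (hsolψ j).pdx_pdx_mul_eq (hsolφ j) (hψ j) (hφ j) hIo (hy j)
    (hyne j x t ht) (halp j x t ht) ht,
    fun j x t ht => (hsolψ j).pdt_mul_eq (hsolφ j) (hψ j) (hφ j) hIo (hy j) ht⟩

/-- solutions of the Garnier-type system (G) produce, via `yⱼ = ψⱼφⱼ`, solutions
of (yxx), (yt), (uy), where `αⱼ` are the (constant) Wronskians `ψⱼₓφⱼ − ψⱼφⱼₓ`. -/
theorem statement7
    (n : ℕ) (hn : 1 ≤ n)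
    (lam : Fin n → ℝ) (hlam : Function.Injective lam)
    (a b : ℝ) (I : Set ℝ) (hI : I = Set.Ioo a b) (hI0 : (0:ℝ) ∉ I)
    (psi phi : Fin n → ℝ → ℝ → ℝ)
    (hpsismooth : ∀ j, ContDiffOn ℝ (⊤ : ℕ∞) (uncurry (psi j)) (univ ×ˢ I))
    (hphismooth : ∀ j, ContDiffOn ℝ (⊤ : ℕ∞) (uncurry (phi j)) (univ ×ˢ I))
    -- the products yⱼ = ψⱼφⱼ
    (y : Fin n → ℝ → ℝ → ℝ)
    (hy : ∀ j x t, y j x t = psi j x t * phi j x t)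
    (hyne : ∀ j x t, t ∈ I → y j x t ≠ 0)
    -- the Garnier-type system (G), with u given by the constraint
    (hpsixx : ∀ j x t, t ∈ I →
      pdx (pdx (psi j)) x t = (ucon n y x t - lam j) * psi j x t)
    (hphixx : ∀ j x t, t ∈ I →
      pdx (pdx (phi j)) x t = (ucon n y x t - lam j) * phi j x t)
    (hpsit : ∀ j x t, t ∈ I →
      pdt (psi j) x t
        = pdx (ucon n y) x t * psi j x t - 2*(ucon n y x t + 2*lam j) * pdx (psi j) x t)
    (hphit : ∀ j x t, t ∈ I →
      pdt (phi j) x t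
        = pdx (ucon n y) x t * phi j x t - 2*(ucon n y x t + 2*lam j) * pdx (phi j) x t) :
    -- the Wronskians are constant, and the yⱼ solve (yxx) and (yt) with those constants
    ∃ alp : Fin n → ℝ,
      (∀ j x t, t ∈ I →
        pdx (psi j) x t * phi j x t - psi j x t * pdx (phi j) x t = alp j)
      ∧ (∀ j x t, t ∈ I →
        pdx (pdx (y j)) x t
          = ((pdx (y j) x t)^2 - (alp j)^2) / (2 * y j x t)
            + 2 * (ucon n y x t - lam j) * y j x t)
      ∧ (∀ j x t, t ∈ I →
        pdt (y j) x t
          = 2 * pdx (ucon n y) x t * y j x t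
            - 2 * (ucon n y x t + 2*lam j) * pdx (y j) x t) :=
  statement7_general n lam a b I hI psi phi hpsismooth hphismooth y hy hyne hpsixx hphixx hpsit
    hphit
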